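/- Let T be a rooted tree with the cut-off property, and let T'' be obtained from T by attaching at most one new leaf to each of a set of chosen vertices, where each chosen vertex is a leaf of T whose parent's subtree sizes still satisfy the cut-off condition after the additions (specifically: each chosen vertex currently roots a subtree of size 1 and attaching one leaf makes it size 2 ≤ 2^{i'} for the relevant i' at its parent). Then T'' also has the cut-off property, and hence a_t(T'') = 1. -/

import Mathlib

open Finset

/-- A total acquisition move in graph `G`. -/
def AcqMove {V : Type*} [DecidableEq V] (G : SimpleGraph V) (w w' : V → ℕ) : Prop :=
  ∃ u v, G.Adj u v ∧ 0 < w u ∧ w u ≤ w v ∧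
    w' = Function.update (Function.update w u 0) v (w v + w u)

/-- Reachability by acquisition moves. -/
def AcqReach {V : Type*} [DecidableEq V] (G : SimpleGraph V) : (V → ℕ) → (V → ℕ) → Prop :=
  Relation.ReflTransGen (AcqMove G)

/-- No legal acquisition move remains. -/
def AcqMaximal {V : Type*} [DecidableEq V] (G : SimpleGraph V) (w : V → ℕ) : Prop :=
  ¬ ∃ w', AcqMove G w w'

/-- The size of the residual set. -/
noncomputable def residualCard {V : Type*} (w : V → ℕ) : ℕ :=
  Nat.card {v : V // 0 < w v}

/-- The total acquisition number of `G`. -/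
noncomputable def atNum {V : Type*} [DecidableEq V] (G : SimpleGraph V) : ℕ :=
  sInf { k | ∃ w, AcqReach G (fun _ => 1) w ∧ AcqMaximal G w ∧ residualCard w = k }

/-- A finite rooted tree given by a parent function. -/
structure RTree (V : Type*) where
  parent : V → V
  root : V
  root_fixed : parent root = root
  reach : ∀ v, ∃ n, parent^[n] v = root

open scoped Classical in
/-- The subtree (set of descendants, including `v`) rooted at `v`. -/
noncomputable def RTree.subtree {V : Type*} [Fintype V] (T : RTree V) (v : V) :
    Finset V :=
  Finset.univ.filter fun u => ∃ n, T.parent^[n] u = v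

/-- `u` is a child of `v`. -/
def RTree.isChild {V : Type*} (T : RTree V) (u v : V) : Prop :=
  u ≠ T.root ∧ T.parent u = v

/-- `l` is a leaf: it has no children. -/
def RTree.IsLeaf {V : Type*} (T : RTree V) (l : V) : Prop :=
  ¬ ∃ u, T.isChild u l

/-- The underlying (undirected) graph of a rooted tree. -/
def RTree.graph {V : Type*} (T : RTree V) : SimpleGraph V :=
  SimpleGraph.fromRel fun u v => u ≠ T.root ∧ T.parent u = v

/-- The cut-off property (0-based indices): for each vertex `v`, its children can be
enumerated so that, for some `i'`, the subtree at the `idx`-th child has exactly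
`2^idx` vertices for `idx < i'` and at most `2^{i'}` vertices for `idx ≥ i'`. -/
def RTree.CutOff {V : Type*} [Fintype V] (T : RTree V) : Prop :=
  ∀ v : V, ∃ l : List V, l.Nodup ∧ (∀ u, u ∈ l ↔ T.isChild u v) ∧
    ∃ i' : ℕ,
      (∀ (i : ℕ) (h : i < l.length), i < i' → (T.subtree l[i]).card = 2 ^ i) ∧
      (∀ (i : ℕ) (h : i < l.length), i' ≤ i → (T.subtree l[i]).card ≤ 2 ^ i')

/-!
Adding a leaf below a vertex appends a child of subtree size `1` to the end of its
enumeration of children, and cutting `i'` down to the length of the old enumeration keeps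
the cut-off condition; so `T''` has the cut-off property.

For the acquisition number, the weight of every subtree can be gathered at its root, by
induction: gather each child's subtree at the child, then let the root absorb the children in
the cut-off order. This is legal because the sizes `2^0, …, 2^(i'-1)` sum to `2^i' - 1`, so the
child of index `j` never carries more than the `1 + ∑_{i<j} |T_i|` already held by the root.
Gathering the whole tree at its root leaves a single residual vertex.
-/

namespace RTree

variable {V : Type*} (T : RTree V)

theorem eq_root_of_isPeriodicPt {v : V} {k : ℕ} (hk : 0 < k)
    (h : Function.IsPeriodicPt T.parent k v) : v = T.root := by
  obtain ⟨n, hn⟩ := T.reach v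
  calc v = T.parent^[k * n] v := (h.mul_const n).eq.symm
    _ = T.parent^[k * n - n] (T.parent^[n] v) := by
      rw [← Function.iterate_add_apply, Nat.sub_add_cancel (Nat.le_mul_of_pos_left n hk)]
    _ = T.root := by rw [hn, Function.iterate_fixed T.root_fixed]

variable [Fintype V]

theorem mem_subtree {u v : V} : u ∈ T.subtree v ↔ ∃ n, T.parent^[n] u = v := by
  simp [RTree.subtree]

theorem mem_subtree_self (v : V) : v ∈ T.subtree v :=
  (T.mem_subtree).2 ⟨0, rfl⟩

theorem subtree_root : T.subtree T.root = univ :=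
  eq_univ_of_forall fun x => T.mem_subtree.2 (T.reach x)

variable {T}

theorem isChild.subtree_subset {u v : V} (h : T.isChild u v) : T.subtree u ⊆ T.subtree v := by
  intro x hx
  obtain ⟨n, hn⟩ := T.mem_subtree.1 hx
  exact T.mem_subtree.2 ⟨n + 1, by rw [Function.iterate_succ_apply', hn, h.2]⟩

theorem isChild.notMem_subtree {u v : V} (h : T.isChild u v) : v ∉ T.subtree u := by
  intro hv
  obtain ⟨n, hn⟩ := T.mem_subtree.1 hv
  have hroot : v = T.root := T.eq_root_of_isPeriodicPt n.succ_pos <| by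
    rw [Function.IsPeriodicPt, Function.IsFixedPt, Function.iterate_succ_apply', hn, h.2]
  rw [hroot, Function.iterate_fixed T.root_fixed] at hn
  exact h.1 hn.symm

theorem isChild.ne {u v : V} (h : T.isChild u v) : u ≠ v := by
  rintro rfl
  exact h.notMem_subtree (T.mem_subtree_self u)

theorem isChild.card_subtree_lt {u v : V} (h : T.isChild u v) :
    #(T.subtree u) < #(T.subtree v) :=
  card_lt_card ⟨h.subtree_subset, fun hsub => h.notMem_subtree (hsub (T.mem_subtree_self v))⟩

theorem isChild.graph_adj {u v : V} (h : T.isChild u v) : T.graph.Adj u v := by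
  rw [RTree.graph, SimpleGraph.fromRel_adj]
  exact ⟨h.ne, Or.inl h⟩

theorem disjoint_subtree_of_isChild {c d v : V} (hc : T.isChild c v) (hd : T.isChild d v)
    (hne : c ≠ d) : Disjoint (T.subtree c) (T.subtree d) := by
  -- otherwise the lower of `c`, `d` is a descendant of the other, hence so is their parent `v`
  suffices key : ∀ {c d : V}, T.isChild c v → T.isChild d v → ∀ {x : V} {n m : ℕ}, n ≤ m →
      T.parent^[n] x = c → T.parent^[m] x = d → c = d by
    refine disjoint_left.2 fun x hxc hxd => ?_
    obtain ⟨n, hn⟩ := T.mem_subtree.1 hxc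
    obtain ⟨m, hm⟩ := T.mem_subtree.1 hxd
    rcases le_total n m with h | h
    exacts [hne (key hc hd h hn hm), hne (key hd hc h hm hn).symm]
  intro c d hc hd x n m hnm hn hm
  obtain ⟨k, rfl⟩ := Nat.exists_eq_add_of_le hnm
  rw [add_comm, Function.iterate_add_apply, hn] at hm
  cases k with
  | zero => exact hm
  | succ k =>
    rw [Function.iterate_succ_apply, hc.2] at hm
    exact absurd (T.mem_subtree.2 ⟨k, hm⟩) hd.notMem_subtree

theorem mem_subtree_iff_eq_or_exists_isChild {x v : V} :
    x ∈ T.subtree v ↔ x = v ∨ ∃ c, T.isChild c v ∧ x ∈ T.subtree c := by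
  refine ⟨fun hx => ?_, ?_⟩
  · obtain ⟨n, hn⟩ := T.mem_subtree.1 hx
    induction n generalizing x with
    | zero => exact Or.inl hn
    | succ k ih =>
      rw [Function.iterate_succ_apply] at hn
      rcases ih (T.mem_subtree.2 ⟨k, hn⟩) hn with rfl | ⟨c, hc, hpc⟩
      · by_cases hx : x = T.root
        · exact Or.inl (hx ▸ T.root_fixed.symm)
        · exact Or.inr ⟨x, ⟨hx, rfl⟩, T.mem_subtree_self x⟩
      · exact Or.inr ⟨c, hc, T.mem_subtree.2 <| by
          obtain ⟨m, hm⟩ := T.mem_subtree.1 hpc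
          exact ⟨m + 1, by rwa [Function.iterate_succ_apply]⟩⟩
  · rintro (rfl | ⟨c, hc, hxc⟩)
    exacts [T.mem_subtree_self x, hc.subtree_subset hxc]

theorem subtree_eq_singleton_of_isLeaf {v : V} (h : T.IsLeaf v) : T.subtree v = {v} := by
  ext x
  rw [mem_subtree_iff_eq_or_exists_isChild, mem_singleton]
  exact ⟨fun hx => hx.resolve_right fun ⟨c, hc, _⟩ => h ⟨c, hc⟩, Or.inl⟩

theorem card_subtree_eq [DecidableEq V] {v : V} {l : List V} (hl : l.Nodup)
    (hmem : ∀ u, u ∈ l ↔ T.isChild u v) :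
    #(T.subtree v) = 1 + (l.map fun c => #(T.subtree c)).sum := by
  have hdecomp : T.subtree v = insert v (l.toFinset.biUnion T.subtree) := by
    ext x
    simp only [mem_insert, mem_biUnion, List.mem_toFinset, hmem]
    exact mem_subtree_iff_eq_or_exists_isChild
  have hv : v ∉ l.toFinset.biUnion T.subtree := by
    simp only [mem_biUnion, List.mem_toFinset, hmem, not_exists, not_and]
    exact fun c hc => hc.notMem_subtree
  rw [hdecomp, card_insert_of_notMem hv, card_biUnion, List.sum_toFinset _ hl, add_comm]
  intro c hc d hd hne
  exact disjoint_subtree_of_isChild ((hmem c).1 (List.mem_toFinset.1 hc))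
    ((hmem d).1 (List.mem_toFinset.1 hd)) hne

end RTree

def CutOffSizes (s : List ℕ) : Prop :=
  ∃ i' : ℕ, (∀ (i : ℕ) (h : i < s.length), i < i' → s[i] = 2 ^ i) ∧
    (∀ (i : ℕ) (h : i < s.length), i' ≤ i → s[i] ≤ 2 ^ i')

theorem cutOffSizes_map_iff {α : Type*} {f : α → ℕ} {l : List α} :
    CutOffSizes (l.map f) ↔ ∃ i' : ℕ, (∀ (i : ℕ) (h : i < l.length), i < i' → f l[i] = 2 ^ i) ∧
      (∀ (i : ℕ) (h : i < l.length), i' ≤ i → f l[i] ≤ 2 ^ i') := by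
  simp [CutOffSizes]

theorem cutOffSizes_nil : CutOffSizes [] :=
  ⟨0, fun _ h => absurd h (Nat.not_lt_zero _), fun _ h => absurd h (Nat.not_lt_zero _)⟩

namespace CutOffSizes

variable {s : List ℕ}

theorem append_one (hs : CutOffSizes s) : CutOffSizes (s ++ [1]) := by
  obtain ⟨i', hexact, hle⟩ := hs
  refine ⟨min i' s.length, fun i h hi => ?_, fun i h hi => ?_⟩
  · have hi' : i < s.length := lt_of_lt_of_le hi (min_le_right _ _)
    rw [List.getElem_append_left hi']
    exact hexact i hi' (lt_of_lt_of_le hi (min_le_left _ _))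
  · rcases lt_or_eq_of_le (Nat.lt_succ_iff.1 (by simpa using h)) with hi' | rfl
    · have hmin : min i' s.length = i' := min_eq_left (by omega)
      rw [List.getElem_append_left hi', hmin]
      exact hle i hi' (hmin ▸ hi)
    · simpa using Nat.one_le_two_pow

theorem getElem_le_one_add_sum_take (hs : CutOffSizes s) (j : ℕ) (hj : j < s.length) :
    s[j] ≤ 1 + (s.take j).sum := by
  obtain ⟨i', hexact, hle⟩ := hs
  have hprefix : ∀ k ≤ min i' j, (s.take k).sum + 1 = 2 ^ k := by
    intro k hk
    induction k with
    | zero => simp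
    | succ k ih =>
      have hk' : k < s.length := by omega
      rw [List.sum_take_succ _ _ hk', add_right_comm, ih (by omega), hexact k hk' (by omega)]
      ring
  have hmono : (s.take (min i' j)).sum ≤ (s.take j).sum := by
    calc (s.take (min i' j)).sum = ((s.take j).take (min i' j)).sum := by
          rw [List.take_take, min_eq_left (min_le_right i' j)]
      _ ≤ (s.take j).sum := (List.take_sublist _ _).sum_le_sum fun _ _ => Nat.zero_le _
  have hbound : s[j] ≤ 2 ^ min i' j := by
    rcases lt_or_ge j i' with h | h
    · rw [min_eq_right h.le, hexact j hj h]
    · rw [min_eq_left h]; exact hle j hj h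
  have := hprefix _ le_rfl
  omega

end CutOffSizes

namespace RTree

variable {V : Type*} [Fintype V] {T : RTree V}

def IsCutOffList (T : RTree V) (v : V) (l : List V) : Prop :=
  l.Nodup ∧ (∀ u, u ∈ l ↔ T.isChild u v) ∧ CutOffSizes (l.map fun c => #(T.subtree c))

theorem cutOff_iff : T.CutOff ↔ ∀ v, ∃ l, T.IsCutOffList v l := by
  simp only [RTree.CutOff, IsCutOffList, cutOffSizes_map_iff]

theorem isCutOffList_nil_of_isLeaf {v : V} (h : T.IsLeaf v) : T.IsCutOffList v [] :=
  ⟨List.nodup_nil, fun u => iff_of_false List.not_mem_nil fun hu => h ⟨u, hu⟩, cutOffSizes_nil⟩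

theorem isCutOffList_append_leaf {v l : V} {lst : List V} (hnd : lst.Nodup)
    (hmem : ∀ u, u ∈ lst ↔ T.isChild u v ∧ u ≠ l) (hl : T.isChild l v) (hleaf : T.IsLeaf l)
    (hs : CutOffSizes (lst.map fun c => #(T.subtree c))) : T.IsCutOffList v (lst ++ [l]) := by
  refine ⟨?_, fun u => ?_, ?_⟩
  · rw [← List.concat_eq_append]
    exact hnd.concat fun h => ((hmem l).1 h).2 rfl
  · rw [List.mem_append, List.mem_singleton, hmem]
    constructor
    · rintro (⟨hu, -⟩ | rfl)
      exacts [hu, hl]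
    · intro hu
      by_cases hul : u = l
      exacts [Or.inr hul, Or.inl ⟨hu, hul⟩]
  · simpa [subtree_eq_singleton_of_isLeaf hleaf] using hs.append_one

end RTree

section Acquisition

variable {V : Type*} [DecidableEq V] {G : SimpleGraph V}

theorem AcqMove.sum_eq [Fintype V] {w w' : V → ℕ} (h : AcqMove G w w') :
    ∑ x, w' x = ∑ x, w x := by
  obtain ⟨u, v, hadj, -, -, rfl⟩ := h
  rw [sum_update_of_mem (mem_univ v), sum_update_of_mem (by simp [hadj.ne] : u ∈ univ \ {v}),
    ← sum_sdiff (subset_univ {u, v}), sum_pair hadj.ne, sdiff_sdiff_left, insert_eq,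
    sup_eq_union, union_comm]
  ring

theorem AcqReach.sum_eq [Fintype V] {w w' : V → ℕ} (h : AcqReach G w w') :
    ∑ x, w' x = ∑ x, w x := by
  induction h with
  | refl => rfl
  | tail _ hmove ih => rw [hmove.sum_eq, ih]

theorem acqReach_update_of_adj {w : V → ℕ} {u v : V} (hadj : G.Adj u v) (h : w u ≤ w v) :
    AcqReach G w (Function.update (Function.update w u 0) v (w v + w u)) := by
  rcases Nat.eq_zero_or_pos (w u) with h0 | hpos
  · have : Function.update (Function.update w u 0) v (w v + w u) = w := by
      rw [h0, add_zero, ← h0, Function.update_eq_self, Function.update_eq_self]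
    rw [this]
    exact Relation.ReflTransGen.refl
  · exact Relation.ReflTransGen.single ⟨u, v, hadj, hpos, h, rfl⟩

theorem acqReach_absorb_list {v : V} :
    ∀ {l : List V} {w : V → ℕ}, l.Nodup → (∀ c ∈ l, G.Adj c v) →
      (∀ (j : ℕ) (hj : j < l.length), w l[j] ≤ w v + ((l.map w).take j).sum) →
      AcqReach G w (Function.update (fun x => if x ∈ l then 0 else w x) v (w v + (l.map w).sum))
  | [], w, _, _, _ => by
    simp only [List.not_mem_nil, if_false, List.map_nil, List.sum_nil, add_zero,
      Function.update_eq_self]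
    exact Relation.ReflTransGen.refl
  | c :: l, w, hl, hadj, hle => by
    set w' := Function.update (Function.update w c 0) v (w v + w c) with hw'
    have hv : v ∉ c :: l := fun h => (hadj v h).ne rfl
    have hw'v : w' v = w v + w c := Function.update_self ..
    have hw'l : ∀ x ∈ l, w' x = w x := by
      intro x hx
      rw [hw', Function.update_of_ne (by rintro rfl; exact hv (List.mem_cons_of_mem c hx)),
        Function.update_of_ne (by rintro rfl; exact (List.nodup_cons.1 hl).1 hx)]
    have hmap : l.map w' = l.map w := List.map_congr_left hw'l
    have hfirst : AcqReach G w w' := by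
      refine acqReach_update_of_adj (hadj c List.mem_cons_self) ?_
      have h0 := hle 0 (by simp)
      rw [List.getElem_cons_zero] at h0
      simpa using h0
    have hrest := acqReach_absorb_list (w := w') (List.nodup_cons.1 hl).2
      (fun x hx => hadj x (List.mem_cons_of_mem c hx)) fun j hj => by
        rw [hmap, hw'v, hw'l _ (List.getElem_mem hj)]
        have hj1 := hle (j + 1) (by simpa using hj)
        rw [List.getElem_cons_succ] at hj1
        simpa [add_assoc] using hj1
    have hall : AcqReach G w _ := hfirst.trans hrest
    convert hall using 1
    rw [hmap, hw'v]
    ext x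
    by_cases hxv : x = v
    · subst hxv; simp [add_assoc]
    · by_cases hxc : x = c
      · subst hxc; simp [hw', hxv, (List.nodup_cons.1 hl).1]
      · simp [hw', hxv, hxc]

def CanGather (G : SimpleGraph V) (S : Finset V) (c : V) : Prop :=
  ∀ w : V → ℕ, (∀ x ∈ S, w x = 1) →
    AcqReach G w (Function.update (fun x => if x ∈ S then 0 else w x) c #S)

theorem acqReach_gather_list {S : V → Finset V} :
    ∀ {l : List V} {w : V → ℕ}, l.Pairwise (fun c d => Disjoint (S c) (S d)) →
      (∀ c ∈ l, c ∈ S c) → (∀ c ∈ l, CanGather G (S c) c) → (∀ c ∈ l, ∀ x ∈ S c, w x = 1) →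
      AcqReach G w (fun x => if x ∈ l then #(S x) else if ∃ c ∈ l, x ∈ S c then 0 else w x)
  | [], w, _, _, _, _ => by
    simp only [List.not_mem_nil, if_false, false_and, exists_false]
    exact Relation.ReflTransGen.refl
  | c :: l, w, hdisj, hself, hgather, hw => by
    obtain ⟨hdisjc, hdisj⟩ := List.pairwise_cons.1 hdisj
    have hnot : ∀ d ∈ l, ∀ x ∈ S c, x ∉ S d := fun d hd _ hx =>
      disjoint_left.1 (hdisjc d hd) hx
    have hcS : c ∈ S c := hself c List.mem_cons_self
    have hcl : c ∉ l := fun h => hnot c h c hcS hcS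
    set w₁ := Function.update (fun x => if x ∈ S c then 0 else w x) c #(S c) with hw₁
    have hw₁_out : ∀ x ∉ S c, w₁ x = w x := fun x hx => by
      rw [hw₁, Function.update_of_ne (by rintro rfl; exact hx hcS), if_neg hx]
    have hfirst : AcqReach G w w₁ :=
      hgather c List.mem_cons_self w (hw c List.mem_cons_self)
    have hrest := acqReach_gather_list (w := w₁) hdisj
      (fun d hd => hself d (List.mem_cons_of_mem c hd))
      (fun d hd => hgather d (List.mem_cons_of_mem c hd)) fun d hd x hx => by
        rw [hw₁_out x fun h => hnot d hd x h hx]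
        exact hw d (List.mem_cons_of_mem c hd) x hx
    have hall : AcqReach G w _ := hfirst.trans hrest
    convert hall using 1
    ext x
    by_cases hxc : x ∈ S c
    · have hxl : x ∉ l := fun h => hnot x h x hxc (hself x (List.mem_cons_of_mem c h))
      have hxS : ¬ ∃ d ∈ l, x ∈ S d := fun ⟨d, hd, hx⟩ => hnot d hd x hxc hx
      by_cases hx : x = c
      · subst hx; simp [hw₁, hcl, hxS]
      · simp [hw₁, hx, hxl, hxc, hxS]
    · have hx : x ≠ c := by rintro rfl; exact hxc hcS
      simp [hw₁_out x hxc, hx, hxc]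

theorem AcqReach.exists_pos [Fintype V] [Nonempty V] {w : V → ℕ}
    (h : AcqReach G (fun _ => 1) w) : ∃ x, 0 < w x := by
  by_contra! hzero
  have hsum := h.sum_eq
  simp only [sum_const, card_univ, smul_eq_mul, mul_one] at hsum
  rw [sum_eq_zero fun x _ => Nat.le_zero.1 (hzero x)] at hsum
  exact Fintype.card_ne_zero hsum.symm

theorem atNum_eq_one_of_canGather_univ [Fintype V] {r : V} (h : CanGather G univ r) :
    atNum G = 1 := by
  have : Nonempty V := ⟨r⟩
  set w₀ := Function.update (fun x => if x ∈ univ then 0 else 1) r #(univ : Finset V)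
  have hreach : AcqReach G (fun _ => 1) w₀ := h _ fun _ _ => rfl
  have hpos : ∀ x, 0 < w₀ x ↔ x = r := fun x => by
    by_cases hx : x = r
    · subst hx; simp [w₀, Fintype.card_pos]
    · simp [w₀, hx]
  have hmax : AcqMaximal G w₀ := by
    rintro ⟨_, u, v, hadj, hu, huv, -⟩
    have hv : ¬ 0 < w₀ v := fun hv => hadj.ne (((hpos u).1 hu).trans ((hpos v).1 hv).symm)
    omega
  have hres : residualCard w₀ = 1 := by
    rw [residualCard, Nat.card_eq_one_iff_exists]
    exact ⟨⟨r, (hpos r).2 rfl⟩, fun y => Subtype.ext ((hpos y).1 y.2)⟩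
  refine le_antisymm (Nat.sInf_le ⟨w₀, hreach, hmax, hres⟩)
    (le_csInf ⟨1, w₀, hreach, hmax, hres⟩ ?_)
  rintro k ⟨w, hw, -, rfl⟩
  obtain ⟨x, hx⟩ := hw.exists_pos
  have : Nonempty {v // 0 < w v} := ⟨⟨x, hx⟩⟩
  exact Nat.card_pos

end Acquisition

namespace RTree

variable {V : Type*} [Fintype V] [DecidableEq V] {T : RTree V}

theorem CutOff.canGather_subtree (hcut : T.CutOff) (v : V) :
    CanGather T.graph (T.subtree v) v := by
  induction hn : #(T.subtree v) using Nat.strong_induction_on generalizing v with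
  | _ n ih =>
  intro w hw
  obtain ⟨l, hl, hmem, hsizes⟩ := cutOff_iff.1 hcut v
  have hchild : ∀ c ∈ l, T.isChild c v := fun c hc => (hmem c).1 hc
  have hvl : v ∉ l := fun h => (hchild v h).ne rfl
  have hv_out : ¬ ∃ c ∈ l, v ∈ T.subtree c := fun ⟨c, hc, hv⟩ =>
    (hchild c hc).notMem_subtree hv
  set w₁ : V → ℕ := fun x =>
    if x ∈ l then #(T.subtree x) else if ∃ c ∈ l, x ∈ T.subtree c then 0 else w x with hw₁
  have hgather : AcqReach T.graph w w₁ := acqReach_gather_list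
    (hl.pairwise_of_forall_ne fun c hc d hd hne =>
      disjoint_subtree_of_isChild (hchild c hc) (hchild d hd) hne)
    (fun c _ => T.mem_subtree_self c)
    (fun c hc => ih _ (hn ▸ (hchild c hc).card_subtree_lt) c rfl)
    (fun c hc x hx => hw x ((hchild c hc).subtree_subset hx))
  have hw₁v : w₁ v = 1 := by simp [hw₁, hvl, hv_out, hw v (T.mem_subtree_self v)]
  have hw₁l : ∀ c ∈ l, w₁ c = #(T.subtree c) := fun c hc => if_pos hc
  have hmap : l.map w₁ = l.map fun c => #(T.subtree c) := List.map_congr_left hw₁l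
  have habsorb := acqReach_absorb_list (G := T.graph) (w := w₁) hl
    (fun c hc => (hchild c hc).graph_adj) fun j hj => by
      have hle := hsizes.getElem_le_one_add_sum_take j (by simpa using hj)
      rw [List.getElem_map] at hle
      rwa [hmap, hw₁v, hw₁l _ (List.getElem_mem hj)]
  have hall : AcqReach T.graph w _ := hgather.trans habsorb
  convert hall using 1
  rw [hmap, hw₁v, ← T.card_subtree_eq hl hmem]
  ext x
  by_cases hxv : x = v
  · subst hxv; simp
  · by_cases hxl : x ∈ l
    · simp [hxv, hxl, (hchild x hxl).subtree_subset (T.mem_subtree_self x)]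
    · have hxS : x ∈ T.subtree v ↔ ∃ c ∈ l, x ∈ T.subtree c := by
        rw [mem_subtree_iff_eq_or_exists_isChild]
        simp [hxv, hmem]
      simp [hxv, hxl, hw₁, hxS]

theorem CutOff.atNum_eq_one (hcut : T.CutOff) : atNum T.graph = 1 :=
  atNum_eq_one_of_canGather_univ (T.subtree_root ▸ hcut.canGather_subtree T.root)

end RTree

theorem stmt17_general {V : Type*} [Fintype V] [DecidableEq V] (T'' : RTree V) (L : Finset V)
    (hleaf : ∀ l ∈ L, T''.IsLeaf l)
    (hroot : T''.root ∉ L)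
    (hdist : ∀ l ∈ L, ∀ l' ∈ L, T''.parent l = T''.parent l' → l = l')
    (hcut : ∀ v : V, v ∉ L → ∃ lst : List V, lst.Nodup ∧
      (∀ u, u ∈ lst ↔ (T''.isChild u v ∧ u ∉ L)) ∧
      ∃ i' : ℕ,
        ((∀ (idx : ℕ) (h : idx < lst.length), idx < i' →
          (T''.subtree lst[idx]).card = 2 ^ idx ∧ ∀ l ∈ L, l ∉ T''.subtree lst[idx]) ∧
        (∀ (idx : ℕ) (h : idx < lst.length), i' ≤ idx →
          (T''.subtree lst[idx]).card ≤ 2 ^ i'))) :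
    T''.CutOff ∧ atNum T''.graph = 1 := by
  have hcutoff : T''.CutOff := by
    refine RTree.cutOff_iff.2 fun v => ?_
    by_cases hvL : v ∈ L
    · exact ⟨[], RTree.isCutOffList_nil_of_isLeaf (hleaf v hvL)⟩
    obtain ⟨lst, hnd, hmem, i', hexact, hle⟩ := hcut v hvL
    have hsizes : CutOffSizes (lst.map fun c => #(T''.subtree c)) :=
      cutOffSizes_map_iff.2 ⟨i', fun i h hi => (hexact i h hi).1, hle⟩
    by_cases hnew : ∃ l ∈ L, T''.parent l = v
    · obtain ⟨l, hlL, rfl⟩ := hnew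
      refine ⟨lst ++ [l], RTree.isCutOffList_append_leaf hnd (fun u => ?_)
        ⟨fun h => hroot (h ▸ hlL), rfl⟩ (hleaf l hlL) hsizes⟩
      rw [hmem]
      exact and_congr_right fun hu =>
        ⟨fun huL hul => huL (hul ▸ hlL), fun hul huL => hul (hdist u huL l hlL hu.2)⟩
    · refine ⟨lst, hnd, fun u => ?_, hsizes⟩
      rw [hmem]
      exact and_iff_left_of_imp fun hu huL => hnew ⟨u, huL, hu.2⟩
  exact ⟨hcutoff, hcutoff.atNum_eq_one⟩

/-- Let `T''` be a rooted tree obtained from a tree `T` with the cut-off property by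
attaching at most one new leaf (the elements of `L`) to each of a set of chosen vertices,
where each chosen vertex is a leaf of `T` (so its `T''`-subtree is exactly itself plus
its new leaf) and the cut-off witnesses of `T` remain valid after the additions (the
exact children's subtrees are unchanged and the non-exact children's enlarged subtrees
still have size at most `2^{i'}`).  Then `T''` has the cut-off property, and hence
`a_t(T'') = 1`. -/
theorem stmt17 {V : Type*} [Fintype V] [DecidableEq V] (T'' : RTree V) (L : Finset V)
    (hleaf : ∀ l ∈ L, T''.IsLeaf l)
    (hroot : T''.root ∉ L)
    (hpar : ∀ l ∈ L, T''.parent l ∉ L)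
    (hdist : ∀ l ∈ L, ∀ l' ∈ L, T''.parent l = T''.parent l' → l = l')
    (hsize2 : ∀ l ∈ L, T''.subtree (T''.parent l) = {T''.parent l, l})
    (hcut : ∀ v : V, v ∉ L → ∃ lst : List V, lst.Nodup ∧
      (∀ u, u ∈ lst ↔ (T''.isChild u v ∧ u ∉ L)) ∧
      ∃ i' : ℕ,
        ((∀ (idx : ℕ) (h : idx < lst.length), idx < i' →
          (T''.subtree lst[idx]).card = 2 ^ idx ∧ ∀ l ∈ L, l ∉ T''.subtree lst[idx]) ∧
        (∀ (idx : ℕ) (h : idx < lst.length), i' ≤ idx →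
          (T''.subtree lst[idx]).card ≤ 2 ^ i'))) :
    T''.CutOff ∧ atNum T''.graph = 1 :=
  stmt17_general T'' L hleaf hroot hdist hcut
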